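/- Let Γ be a circulant on a finite vertex type with n₁ vertices and Σ a circulant on a finite vertex type with n₂ vertices, where n₁ and n₂ are coprime. Then the tensor product Γ × Σ is a circulant. -/

import Mathlib

/-- A permutation `e` is an automorphism of the digraph with adjacency `Adj`. -/
def IsDigraphAut {V : Type*} (Adj : V → V → Prop) (e : Equiv.Perm V) : Prop :=
  ∀ x y, Adj x y ↔ Adj (e x) (e y)

/-- The automorphism group of a digraph, as a subgroup of the permutation group. -/
def autGroup {V : Type*} (Adj : V → V → Prop) : Subgroup (Equiv.Perm V) where
  carrier := {e | IsDigraphAut Adj e}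
  one_mem' := by intro x y; exact Iff.rfl
  mul_mem' := by
    intro a b ha hb x y
    exact (hb x y).trans (ha (b x) (b y))
  inv_mem' := by
    intro a ha x y
    simpa using (ha (a⁻¹ x) (a⁻¹ y)).symm

/-- A digraph is arc-transitive if its automorphism group is transitive on arcs. -/
def ArcTransitive {V : Type*} (Adj : V → V → Prop) : Prop :=
  ∀ x y u v, Adj x y → Adj u v → ∃ e ∈ autGroup Adj, e x = u ∧ e y = v

/-- A subgroup of the permutation group of `V` is regular on `V`. -/
def IsRegularSub {V : Type*} (H : Subgroup (Equiv.Perm V)) : Prop :=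
  ∀ u v : V, ∃! h : H, (h : Equiv.Perm V) u = v

/-- A circulant: the automorphism group contains a regular cyclic subgroup. -/
def IsCirculant {V : Type*} (Adj : V → V → Prop) : Prop :=
  ∃ H : Subgroup (Equiv.Perm V), H ≤ autGroup Adj ∧ IsCyclic H ∧ IsRegularSub H

/-- A normal circulant: the automorphism group contains a regular cyclic subgroup
that is normal in the automorphism group. -/
def IsNormalCirculant {V : Type*} (Adj : V → V → Prop) : Prop :=
  ∃ H : Subgroup (Equiv.Perm V), H ≤ autGroup Adj ∧ IsCyclic H ∧ IsRegularSub H ∧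
    ∀ e ∈ autGroup Adj, ∀ h ∈ H, e * h * e⁻¹ ∈ H

/-- Tensor (direct) product of digraphs. -/
def tensorAdj {V₁ V₂ : Type*} (Adj₁ : V₁ → V₁ → Prop) (Adj₂ : V₂ → V₂ → Prop) :
    V₁ × V₂ → V₁ × V₂ → Prop :=
  fun p q => Adj₁ p.1 q.1 ∧ Adj₂ p.2 q.2

/-- Lexicographic product `Γ[Kbar_b]` with the edgeless digraph on `b` vertices. -/
def lexAdj {V : Type*} (Adj : V → V → Prop) (b : ℕ) : V × Fin b → V × Fin b → Prop :=
  fun p q => Adj p.1 q.1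

/-- Digraph isomorphism. -/
def DigraphIso {V₁ V₂ : Type*} (Adj₁ : V₁ → V₁ → Prop) (Adj₂ : V₂ → V₂ → Prop) : Prop :=
  ∃ e : V₁ ≃ V₂, ∀ x y, Adj₁ x y ↔ Adj₂ (e x) (e y)

/-- Connectedness: the reflexive–symmetric–transitive closure of adjacency
relates every pair of vertices. -/
def DigraphConnected {V : Type*} (Adj : V → V → Prop) : Prop :=
  ∀ u v : V, Relation.ReflTransGen (fun a b => Adj a b ∨ Adj b a) u v

/-- R-thick digraph: two distinct vertices with the same in- and out-neighbourhoods. -/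
def RThick {V : Type*} (Adj : V → V → Prop) : Prop :=
  ∃ u v : V, u ≠ v ∧ (∀ w, Adj u w ↔ Adj v w) ∧ (∀ w, Adj w u ↔ Adj w v)

/-- The directed 4-cycle on `ZMod 4`. -/
def C4Adj : ZMod 4 → ZMod 4 → Prop := fun x y => y - x = 1 ∨ y - x = 3

/-- Cayley digraph of a group `G` with connection set `S`. -/
def cayAdj (G : Type*) [Group G] (S : Set G) : G → G → Prop :=
  fun x y => y * x⁻¹ ∈ S

/-- The right-regular representation of `G` inside `Equiv.Perm G`. -/
def rightReg (G : Type*) [Group G] : Subgroup (Equiv.Perm G) where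
  carrier := {e | ∃ g : G, ∀ x, e x = x * g}
  one_mem' := ⟨1, by simp⟩
  mul_mem' := by
    rintro a b ⟨g, hg⟩ ⟨h, hh⟩
    exact ⟨h * g, fun x => by simp [Equiv.Perm.mul_apply, hh, hg, mul_assoc]⟩
  inv_mem' := by
    rintro a ⟨g, hg⟩
    refine ⟨g⁻¹, fun x => a.injective ?_⟩
    rw [show a (a⁻¹ x) = x by simp, hg]
    simp

/-- Cayley digraph of `ZMod n` with connection set `S`. -/
def zcayAdj (n : ℕ) (S : Set (ZMod n)) : ZMod n → ZMod n → Prop :=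
  fun x y => y - x ∈ S

/-- The translation subgroup of `Equiv.Perm (ZMod n)`. -/
def transSub (n : ℕ) : Subgroup (Equiv.Perm (ZMod n)) where
  carrier := {e | ∃ g : ZMod n, ∀ x, e x = x + g}
  one_mem' := ⟨0, by simp⟩
  mul_mem' := by
    rintro a b ⟨g, hg⟩ ⟨h, hh⟩
    exact ⟨h + g, fun x => by simp [Equiv.Perm.mul_apply, hh, hg, add_assoc]⟩
  inv_mem' := by
    rintro a ⟨g, hg⟩
    refine ⟨-g, fun x => a.injective ?_⟩
    rw [show a (a⁻¹ x) = x by simp, hg]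
    simp

/-!
If `H₁ ≤ Aut Γ` and `H₂ ≤ Aut Σ` are cyclic and regular, the permutations `(x, y) ↦ (a x, b y)`
with `a ∈ H₁`, `b ∈ H₂` are automorphisms of `Γ × Σ` and form a regular subgroup isomorphic to
`H₁ × H₂`. Regularity gives `|Hᵢ| = nᵢ`, so by the Chinese remainder theorem `H₁ × H₂` is cyclic
when `n₁` and `n₂` are coprime.
-/

open Equiv

section

variable {V₁ V₂ : Type*}

def prodPermHom (V₁ V₂ : Type*) : Perm V₁ × Perm V₂ →* Perm (V₁ × V₂) where
  toFun p := p.1.prodCongr p.2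
  map_one' := rfl
  map_mul' _ _ := rfl

def prodPermSubgroup (H₁ : Subgroup (Perm V₁)) (H₂ : Subgroup (Perm V₂)) :
    Subgroup (Perm (V₁ × V₂)) :=
  (H₁.prod H₂).map (prodPermHom V₁ V₂)

theorem prodPermSubgroup_le_autGroup_tensorAdj {Adj₁ : V₁ → V₁ → Prop}
    {Adj₂ : V₂ → V₂ → Prop} {H₁ : Subgroup (Perm V₁)} {H₂ : Subgroup (Perm V₂)}
    (hle₁ : H₁ ≤ autGroup Adj₁) (hle₂ : H₂ ≤ autGroup Adj₂) :
    prodPermSubgroup H₁ H₂ ≤ autGroup (tensorAdj Adj₁ Adj₂) := by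
  rintro _ ⟨⟨a, b⟩, ⟨ha, hb⟩, rfl⟩ x y
  exact and_congr (hle₁ ha x.1 y.1) (hle₂ hb x.2 y.2)

theorem IsRegularSub.natCard_eq {V : Type*} [Nonempty V] {H : Subgroup (Perm V)}
    (hH : IsRegularSub H) : Nat.card H = Nat.card V := by
  obtain ⟨u⟩ := ‹Nonempty V›
  refine Nat.card_congr (Equiv.ofBijective (fun h : H => (h : Perm V) u) ⟨?_, ?_⟩)
  · intro a b hab
    obtain ⟨_, _, huniq⟩ := hH u ((a : Perm V) u)
    exact (huniq a rfl).trans (huniq b hab.symm).symm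
  · intro v
    obtain ⟨h, hh, _⟩ := hH u v
    exact ⟨h, hh⟩

theorem IsRegularSub.prodPermSubgroup {H₁ : Subgroup (Perm V₁)} {H₂ : Subgroup (Perm V₂)}
    (hreg₁ : IsRegularSub H₁) (hreg₂ : IsRegularSub H₂) :
    IsRegularSub (prodPermSubgroup H₁ H₂) := by
  rintro ⟨u₁, u₂⟩ ⟨v₁, v₂⟩
  obtain ⟨⟨a, ha⟩, hau, huniq₁⟩ := hreg₁ u₁ v₁
  obtain ⟨⟨b, hb⟩, hbu, huniq₂⟩ := hreg₂ u₂ v₂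
  refine ⟨⟨a.prodCongr b, ⟨(a, b), ⟨ha, hb⟩, rfl⟩⟩, Prod.ext hau hbu, ?_⟩
  rintro ⟨_, ⟨⟨c, d⟩, ⟨hc, hd⟩, rfl⟩⟩ he
  obtain rfl : c = a := congrArg Subtype.val (huniq₁ ⟨c, hc⟩ (congrArg Prod.fst he))
  obtain rfl : d = b := congrArg Subtype.val (huniq₂ ⟨d, hd⟩ (congrArg Prod.snd he))
  rfl

theorem isCyclic_prodPermSubgroup {H₁ : Subgroup (Perm V₁)} {H₂ : Subgroup (Perm V₂)}
    [IsCyclic H₁] [IsCyclic H₂] (hco : Nat.Coprime (Nat.card H₁) (Nat.card H₂)) :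
    IsCyclic (prodPermSubgroup H₁ H₂) := by
  have : IsCyclic (H₁ × H₂) := Group.isCyclic_prod_iff.mpr ⟨‹_›, ‹_›, hco⟩
  have : IsCyclic (H₁.prod H₂) := isCyclic_of_surjective _ (H₁.prodEquiv H₂).symm.surjective
  exact isCyclic_of_surjective _ ((prodPermHom V₁ V₂).subgroupMap_surjective (H₁.prod H₂))

end

theorem stmt1 {V₁ V₂ : Type*} [Fintype V₁] [Fintype V₂] [Nonempty V₁] [Nonempty V₂]
    (Adj₁ : V₁ → V₁ → Prop) (Adj₂ : V₂ → V₂ → Prop)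
    (h₁ : IsCirculant Adj₁) (h₂ : IsCirculant Adj₂)
    (hco : Nat.Coprime (Fintype.card V₁) (Fintype.card V₂)) :
    IsCirculant (tensorAdj Adj₁ Adj₂) := by
  obtain ⟨H₁, hle₁, hcyc₁, hreg₁⟩ := h₁
  obtain ⟨H₂, hle₂, hcyc₂, hreg₂⟩ := h₂
  have hcard : Nat.Coprime (Nat.card H₁) (Nat.card H₂) := by
    rwa [hreg₁.natCard_eq, hreg₂.natCard_eq, Nat.card_eq_fintype_card, Nat.card_eq_fintype_card]
  exact ⟨prodPermSubgroup H₁ H₂, prodPermSubgroup_le_autGroup_tensorAdj hle₁ hle₂,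
    isCyclic_prodPermSubgroup hcard, hreg₁.prodPermSubgroup hreg₂⟩
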